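/- The positive type-B Birkhoff polytope B_+(n) := conv{M_σ : σ ∈ B_n} ∩ ℝ^{n×n}_{≥0} equals the matching polytope of the complete bipartite graph K_{n,n}, i.e., the convex hull of the 0/1 matrices with at most one 1 in each row and each column (partial permutation matrices). -/

import Mathlib

open Finset

/-- A sign vector. -/
def IsSignVec {n : ℕ} (σ : Fin n → ℝ) : Prop := ∀ i, σ i = 1 ∨ σ i = -1

/-- The signed permutation matrix associated to a permutation `π` and a sign
vector `ε`: entry `(i, π i)` equals `ε i`, all other entries vanish. -/
def signedPermMatrix {n : ℕ} (π : Equiv.Perm (Fin n)) (ε : Fin n → ℝ) :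
    Fin n → Fin n → ℝ :=
  fun i j => if j = π i then ε i else 0

/-- The set of signed permutation matrices (the matrices `M_σ`, `σ ∈ B_n`). -/
def signedPermMatrices (n : ℕ) : Set (Fin n → Fin n → ℝ) :=
  {M | ∃ (π : Equiv.Perm (Fin n)) (ε : Fin n → ℝ), IsSignVec ε ∧ M = signedPermMatrix π ε}

/-- The type-B (signed) Birkhoff polytope: the convex hull of all signed
permutation matrices. -/
def BB (n : ℕ) : Set (Fin n → Fin n → ℝ) := convexHull ℝ (signedPermMatrices n)

/-- A partial permutation matrix: a `0/1` matrix with at most one `1` in each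
row and in each column. -/
def IsPartialPermMatrix {n : ℕ} (M : Fin n → Fin n → ℝ) : Prop :=
  (∀ i j, M i j = 0 ∨ M i j = 1) ∧
  (∀ i j j', M i j = 1 → M i j' = 1 → j = j') ∧
  (∀ j i i', M i j = 1 → M i' j = 1 → i = i')

/-!
A signed permutation matrix is entrywise below the permutation matrix of the same permutation,
so every nonnegative point of `BB n` lies below a point of the matching polytope. Both polytopes
are stable under entrywise multiplication by matrices with entries in `[0, 1]` (for `BB n` even
`[-1, 1]`): this holds on vertices for the extreme multipliers (`0/1`, resp. `±1` matrices) and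
extends by bilinearity. Hence the matching polytope is down-closed in the nonnegative orthant,
and every partial permutation matrix, being a `0/1` multiple of a permutation matrix, lies in
`BB n`.
-/

open scoped Pointwise

section ConvexHullMul

variable {A : Type*} [NonUnitalNonAssocSemiring A] [Module ℝ A] [SMulCommClass ℝ A A]
  [IsScalarTower ℝ A A]

theorem mul_mem_convexHull_of_forall_mul_mem {V s : Set A} (hVs : ∀ v ∈ V, ∀ x ∈ s, v * x ∈ s)
    {t x : A} (ht : t ∈ convexHull ℝ V) (hx : x ∈ convexHull ℝ s) : t * x ∈ convexHull ℝ s := by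
  have hV : ∀ v ∈ V, v * x ∈ convexHull ℝ s := fun v hv => by
    have hmap : Set.MapsTo (LinearMap.mulLeft ℝ v) s (convexHull ℝ s) :=
      fun y hy => subset_convexHull ℝ s (hVs v hv y hy)
    have := (LinearMap.mulLeft ℝ v).image_convexHull s ▸ Set.mem_image_of_mem _ hx
    exact convexHull_min hmap.image_subset (convex_convexHull ℝ s) this
  exact convexHull_min (t := LinearMap.mulRight ℝ x ⁻¹' convexHull ℝ s) hV
    ((convex_convexHull ℝ s).linear_preimage _) ht

end ConvexHullMul

section EntrywiseProduct

variable {m n : Type*} [Finite m] [Finite n]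

theorem convexHull_setOf_forall_entry_mem (W : Set ℝ) :
    convexHull ℝ {T : m → n → ℝ | ∀ i j, T i j ∈ W} = {T | ∀ i j, T i j ∈ convexHull ℝ W} := by
  have hpi (W : Set ℝ) :
      {T : m → n → ℝ | ∀ i j, T i j ∈ W} = Set.univ.pi fun _ => Set.univ.pi fun _ => W := by
    ext; simp
  simp only [hpi, convexHull_pi]

theorem mem_convexHull_of_nonneg_of_le {s : Set (m → n → ℝ)}
    (hs : ∀ T : m → n → ℝ, (∀ i j, T i j ∈ ({0, 1} : Set ℝ)) → ∀ M ∈ s, T * M ∈ s)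
    {x y : m → n → ℝ} (hx : 0 ≤ x) (hxy : x ≤ y) (hy : y ∈ convexHull ℝ s) :
    x ∈ convexHull ℝ s := by
  -- where `y i j = 0`, also `x i j = 0`, so the junk value `x i j / 0 = 0` is harmless
  have hx_eq : x = x / y * y := by
    ext i j
    exact (div_mul_cancel_of_imp fun h => le_antisymm (h ▸ hxy i j) (hx i j)).symm
  have hratio : x / y ∈ convexHull ℝ {T : m → n → ℝ | ∀ i j, T i j ∈ ({0, 1} : Set ℝ)} := by
    rw [convexHull_setOf_forall_entry_mem, convexHull_pair, segment_eq_Icc zero_le_one]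
    exact fun i j => ⟨div_nonneg (hx i j) ((hx i j).trans (hxy i j)),
      div_le_one_of_le₀ (hxy i j) ((hx i j).trans (hxy i j))⟩
  rw [hx_eq]
  exact mul_mem_convexHull_of_forall_mul_mem hs hratio hy

end EntrywiseProduct

section SignedPermMatrices

variable {n : ℕ}

theorem mul_signedPermMatrix (T : Fin n → Fin n → ℝ) (π : Equiv.Perm (Fin n)) (ε : Fin n → ℝ) :
    T * signedPermMatrix π ε = signedPermMatrix π fun i => T i (π i) * ε i := by
  ext i j
  by_cases h : j = π i <;> simp [signedPermMatrix, h]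

theorem mul_mem_signedPermMatrices {T M : Fin n → Fin n → ℝ}
    (hT : ∀ i j, T i j = -1 ∨ T i j = 1) (hM : M ∈ signedPermMatrices n) :
    T * M ∈ signedPermMatrices n := by
  obtain ⟨π, ε, hε, rfl⟩ := hM
  refine ⟨π, _, fun i => ?_, mul_signedPermMatrix T π ε⟩
  rcases hT i (π i) with h | h <;> rcases hε i with h' | h' <;> simp [h, h']

theorem signedPermMatrix_le_one {π : Equiv.Perm (Fin n)} {ε : Fin n → ℝ} (hε : IsSignVec ε) :
    signedPermMatrix π ε ≤ signedPermMatrix π 1 := fun i j => by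
  by_cases h : j = π i
  · rcases hε i with h' | h' <;> simp [signedPermMatrix, h, h']
  · simp [signedPermMatrix, h]

theorem isPartialPermMatrix_signedPermMatrix_one (π : Equiv.Perm (Fin n)) :
    IsPartialPermMatrix (signedPermMatrix π 1) := by
  refine ⟨fun i j => ?_, fun i j j' h h' => ?_, fun j i i' h h' => ?_⟩
  · by_cases h : j = π i <;> simp [signedPermMatrix, h]
  · simp only [signedPermMatrix] at h h'
    split_ifs at h h' with hj hj' <;> simp_all
  · simp only [signedPermMatrix] at h h'
    split_ifs at h h' with hj hj' <;> simp_all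

end SignedPermMatrices

namespace IsPartialPermMatrix

variable {n : ℕ} {M : Fin n → Fin n → ℝ}

theorem mul {T : Fin n → Fin n → ℝ} (hM : IsPartialPermMatrix M)
    (hT : ∀ i j, T i j = 0 ∨ T i j = 1) : IsPartialPermMatrix (T * M) := by
  obtain ⟨h01, hrow, hcol⟩ := hM
  have hone {i j} (h : (T * M) i j = 1) : M i j = 1 := by
    rcases hT i j with hT | hT <;> simp_all
  refine ⟨fun i j => ?_, fun i j j' h h' => hrow i j j' (hone h) (hone h'),
    fun j i i' h h' => hcol j i i' (hone h) (hone h')⟩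
  rcases hT i j with hT | hT <;> simp [hT, h01 i j]

theorem exists_perm (hM : IsPartialPermMatrix M) :
    ∃ π : Equiv.Perm (Fin n), ∀ i j, M i j = 1 → j = π i := by
  obtain ⟨-, hrow, hcol⟩ := hM
  let col : {i // ∃ j, M i j = 1} → Fin n := fun i => i.2.choose
  have hcol_inj : Function.Injective col := fun i i' h =>
    Subtype.ext (hcol _ _ _ i.2.choose_spec (h ▸ i'.2.choose_spec : M i' (col i) = 1))
  obtain ⟨π, hπ⟩ := Equiv.Perm.exists_extending_pair _ col Subtype.val_injective hcol_inj
  exact ⟨π, fun i j h => hrow i j _ h (hπ ⟨i, j, h⟩ ▸ (⟨j, h⟩ : ∃ j, M i j = 1).choose_spec)⟩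

theorem mem_BB (hM : IsPartialPermMatrix M) : M ∈ BB n := by
  obtain ⟨π, hπ⟩ := hM.exists_perm
  have hM_eq : M = M * signedPermMatrix π 1 := by
    ext i j
    by_cases h : j = π i
    · simp [signedPermMatrix, h]
    · rcases hM.1 i j with h' | h'
      · simp [h']
      · exact absurd (hπ i j h') h
  have hM_box : M ∈ convexHull ℝ {T : Fin n → Fin n → ℝ | ∀ i j, T i j ∈ ({-1, 1} : Set ℝ)} := by
    rw [convexHull_setOf_forall_entry_mem, convexHull_pair, segment_eq_Icc (by norm_num)]
    intro i j
    rcases hM.1 i j with h | h <;> simp [h]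
  rw [hM_eq]
  exact mul_mem_convexHull_of_forall_mul_mem (fun T hT _ => mul_mem_signedPermMatrices hT) hM_box
    (subset_convexHull ℝ _ ⟨π, 1, fun _ => Or.inl rfl, rfl⟩)

end IsPartialPermMatrix

theorem BB_subset_convexHull_add_Iic (n : ℕ) :
    BB n ⊆ convexHull ℝ {M | IsPartialPermMatrix M} + Set.Iic 0 := by
  refine convexHull_min ?_ ((convex_convexHull ℝ _).add (convex_Iic 0))
  rintro _ ⟨π, ε, hε, rfl⟩
  exact ⟨_, subset_convexHull ℝ _ (isPartialPermMatrix_signedPermMatrix_one π), _,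
    sub_nonpos.2 (signedPermMatrix_le_one hε), add_sub_cancel _ _⟩

/-- the positive type-B Birkhoff polytope `BB(n) ∩ ℝ^{n×n}_{≥0}`
is the matching polytope of `K_{n,n}`, i.e. the convex hull of partial
permutation matrices. -/
theorem stmt15 (n : ℕ) :
    BB n ∩ {M | ∀ i j, 0 ≤ M i j} =
      convexHull ℝ {M : Fin n → Fin n → ℝ | IsPartialPermMatrix M} := by
  apply Set.Subset.antisymm
  · rintro _ ⟨hx, hx_nonneg⟩
    obtain ⟨y, hy, d, hd, rfl⟩ := BB_subset_convexHull_add_Iic n hx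
    exact mem_convexHull_of_nonneg_of_le (fun T hT M hM => hM.mul hT) hx_nonneg
      (add_le_of_nonpos_right hd) hy
  · refine convexHull_min (fun M hM => ⟨hM.mem_BB, fun i j => ?_⟩)
      ((convex_convexHull ℝ _).inter (convex_Ici 0))
    rcases hM.1 i j with h | h <;> simp [h]
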